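/- Each of the following birational transformations maps solutions of the G2^(1) system to solutions: with the notation (*) = (x,y,z,w,t; α0,α1,α2), s0: (*) ↦ (x, y, z, w−α0/z, t; −α0, α1+α0, α2); s1: (*) ↦ (x, y−α1/(x−tw), z−α1·t/(x−tw), w, t; α0+α1, −α1, α2+α1); s2: (*) ↦ (x−3α2y²/(z−y³), y, z, w−α2/(z−y³), t; α0, α1+3α2, −α2). Precisely: if (x(t),y(t),z(t),w(t)) is a differentiable solution of the G2^(1) system with parameters (α0,α1,α2) on an open set where t ≠ 0 and the relevant denominators (z, x−tw, z−y³ respectively) do not vanish, then each transformed tuple solves the G2^(1) system with the transformed parameters. These transformations generate the affine Weyl group of type G2^(1). -/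

import Mathlib

/-! Each `sᵢ` is a point transformation of phase space depending rationally on `t`. Along a
solution, the chain rule expresses the derivative of the transformed tuple through the old vector
field. That this equals the new vector field at the transformed point is a rational identity in
`t, x, y, z, w, α₁, α₂` once `α₀ = -2α₁ - 3α₂` is substituted, checked by clearing the
denominators `t`, `z`, `x - t w`, `z - y³`. -/

open Complex

noncomputable def HG2 (a0 a1 a2 : ℂ) (t x y z w : ℂ) : ℂ :=
  -(3*(5*a0 + 18*a1 + 27*a2)*t*x*y^3) - x*y/(2*t)
    + 6*a1*(a0 + 6*a1 + 9*a2)*t*y^2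
    - 12*t^2*z^2*w^2 - (24*(a1+a2)*t^2 - 3/(2*t))*z*w
    + 12*t^2*y^3*z*w^2 - 24*t*x*y^3*z*w + 12*x^2*y^3*z + 24*t*x*z^2*w
    - 12*x^2*z^2 - 12*a0*t^2*y^3*w
    + 12*(2*a0 + 4*a1 + 9*a2)*x*y^2*z + 3*(19*a0 + 38*a1 + 45*a2)*t*y^2*z*w
    - 6*a1*(a0 + 4*a1 + 9*a2)*y*z - 4*(a0 - 4*a1 - 3*a2)*t*x*z

noncomputable def pdX (H : ℂ → ℂ → ℂ → ℂ → ℂ → ℂ) (t x y z w : ℂ) : ℂ :=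
  deriv (fun s => H t s y z w) x

noncomputable def pdY (H : ℂ → ℂ → ℂ → ℂ → ℂ → ℂ) (t x y z w : ℂ) : ℂ :=
  deriv (fun s => H t x s z w) y

noncomputable def pdZ (H : ℂ → ℂ → ℂ → ℂ → ℂ → ℂ) (t x y z w : ℂ) : ℂ :=
  deriv (fun s => H t x y s w) z

noncomputable def pdW (H : ℂ → ℂ → ℂ → ℂ → ℂ → ℂ) (t x y z w : ℂ) : ℂ :=
  deriv (fun s => H t x y z s) w

def IsSol (H : ℂ → ℂ → ℂ → ℂ → ℂ → ℂ) (U : Set ℂ) (x y z w : ℂ → ℂ) : Prop :=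
  ∀ t ∈ U,
    HasDerivAt x (pdY H t (x t) (y t) (z t) (w t)) t ∧
    HasDerivAt y (-(pdX H t (x t) (y t) (z t) (w t))) t ∧
    HasDerivAt z (pdW H t (x t) (y t) (z t) (w t)) t ∧
    HasDerivAt w (-(pdZ H t (x t) (y t) (z t) (w t))) t

theorem deriv_eq_of_eq_cubic {𝕜 : Type*} [NontriviallyNormedField 𝕜] {f : 𝕜 → 𝕜}
    (c3 c2 c1 c0 : 𝕜) (hf : ∀ s, f s = c3*s^3 + c2*s^2 + c1*s + c0) (x : 𝕜) :
    deriv f x = 3*c3*x^2 + 2*c2*x + c1 := by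
  rw [funext hf]
  refine ((((hasDerivAt_pow 3 x).const_mul c3).add ((hasDerivAt_pow 2 x).const_mul c2)).add
    ((hasDerivAt_id x).const_mul c1) |>.add_const c0).deriv.trans ?_
  ring

lemma pdX_HG2 (a0 a1 a2 t x y z w : ℂ) :
    pdX (HG2 a0 a1 a2) t x y z w =
      -(3*(5*a0+18*a1+27*a2)*t*y^3) - y/(2*t) + 24*x*y^3*z - 24*t*y^3*z*w
        + 24*t*z^2*w - 24*x*z^2 + 12*(2*a0+4*a1+9*a2)*y^2*z
        - 4*(a0-4*a1-3*a2)*t*z := by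
  rw [pdX, deriv_eq_of_eq_cubic 0 (12*y^3*z - 12*z^2)
      (-(3*(5*a0+18*a1+27*a2)*t*y^3) - y/(2*t) - 24*t*y^3*z*w + 24*t*z^2*w
        + 12*(2*a0+4*a1+9*a2)*y^2*z - 4*(a0-4*a1-3*a2)*t*z)
      (HG2 a0 a1 a2 t 0 y z w) (fun s => by simp only [HG2]; ring) x]
  ring

lemma pdY_HG2 (a0 a1 a2 t x y z w : ℂ) :
    pdY (HG2 a0 a1 a2) t x y z w =
      -(9*(5*a0+18*a1+27*a2)*t*x*y^2) - x/(2*t) + 12*a1*(a0+6*a1+9*a2)*t*y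
        + 36*t^2*y^2*z*w^2 - 72*t*x*y^2*z*w + 36*x^2*y^2*z - 36*a0*t^2*y^2*w
        + 24*(2*a0+4*a1+9*a2)*x*y*z + 6*(19*a0+38*a1+45*a2)*t*y*z*w
        - 6*a1*(a0+4*a1+9*a2)*z := by
  rw [pdY, deriv_eq_of_eq_cubic
      (-(3*(5*a0+18*a1+27*a2)*t*x) + 12*t^2*z*w^2 - 24*t*x*z*w + 12*x^2*z
        - 12*a0*t^2*w)
      (6*a1*(a0+6*a1+9*a2)*t + 12*(2*a0+4*a1+9*a2)*x*z
        + 3*(19*a0+38*a1+45*a2)*t*z*w)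
      (-(x/(2*t)) - 6*a1*(a0+4*a1+9*a2)*z)
      (HG2 a0 a1 a2 t x 0 z w) (fun s => by simp only [HG2]; ring) y]
  ring

lemma pdZ_HG2 (a0 a1 a2 t x y z w : ℂ) :
    pdZ (HG2 a0 a1 a2) t x y z w =
      -24*t^2*z*w^2 - (24*(a1+a2)*t^2 - 3/(2*t))*w + 12*t^2*y^3*w^2
        - 24*t*x*y^3*w + 12*x^2*y^3 + 48*t*x*z*w - 24*x^2*z
        + 12*(2*a0+4*a1+9*a2)*x*y^2 + 3*(19*a0+38*a1+45*a2)*t*y^2*w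
        - 6*a1*(a0+4*a1+9*a2)*y - 4*(a0-4*a1-3*a2)*t*x := by
  rw [pdZ, deriv_eq_of_eq_cubic 0 (-(12*t^2*w^2) + 24*t*x*w - 12*x^2)
      (-((24*(a1+a2)*t^2 - 3/(2*t))*w) + 12*t^2*y^3*w^2 - 24*t*x*y^3*w
        + 12*x^2*y^3 + 12*(2*a0+4*a1+9*a2)*x*y^2
        + 3*(19*a0+38*a1+45*a2)*t*y^2*w - 6*a1*(a0+4*a1+9*a2)*y
        - 4*(a0-4*a1-3*a2)*t*x)
      (HG2 a0 a1 a2 t x y 0 w) (fun s => by simp only [HG2]; ring) z]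
  ring

lemma pdW_HG2 (a0 a1 a2 t x y z w : ℂ) :
    pdW (HG2 a0 a1 a2) t x y z w =
      -24*t^2*z^2*w - (24*(a1+a2)*t^2 - 3/(2*t))*z + 24*t^2*y^3*z*w
        - 24*t*x*y^3*z + 24*t*x*z^2 - 12*a0*t^2*y^3
        + 3*(19*a0+38*a1+45*a2)*t*y^2*z := by
  rw [pdW, deriv_eq_of_eq_cubic 0 (-(12*t^2*z^2) + 12*t^2*y^3*z)
      (-((24*(a1+a2)*t^2 - 3/(2*t))*z) - 24*t*x*y^3*z + 24*t*x*z^2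
        - 12*a0*t^2*y^3 + 3*(19*a0+38*a1+45*a2)*t*y^2*z)
      (HG2 a0 a1 a2 t x y z 0) (fun s => by simp only [HG2]; ring) w]
  ring

lemma pd_HG2_s0 {a0 a1 a2 : ℂ} (hrel : a0 + 2*a1 + 3*a2 = 0) {t x y z w : ℂ}
    (ht : t ≠ 0) (hz : z ≠ 0) :
    let H := HG2 a0 a1 a2; let H' := HG2 (-a0) (a1+a0) a2; let w' := w - a0/z
    pdY H' t x y z w' = pdY H t x y z w ∧
    pdX H' t x y z w' = pdX H t x y z w ∧
    pdW H' t x y z w' = pdW H t x y z w ∧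
    -pdZ H' t x y z w' = -pdZ H t x y z w + a0 * pdW H t x y z w / z^2 := by
  obtain rfl : a0 = -(2*a1) - 3*a2 := by linear_combination hrel
  simp only [pdX_HG2, pdY_HG2, pdZ_HG2, pdW_HG2]
  refine ⟨?_, ?_, ?_, ?_⟩ <;> field_simp <;> ring

-- `D'` is the derivative of `D = x - t w` along a solution.
lemma pd_HG2_s1 {a0 a1 a2 : ℂ} (hrel : a0 + 2*a1 + 3*a2 = 0) {t x y z w : ℂ}
    (ht : t ≠ 0) (hD : x - t*w ≠ 0) :
    let H := HG2 a0 a1 a2; let H' := HG2 (a0+a1) (-a1) (a2+a1)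
    let D := x - t*w; let y' := y - a1/D; let z' := z - a1*t/D
    let D' := pdY H t x y z w - w + t * pdZ H t x y z w
    pdY H' t x y' z' w = pdY H t x y z w ∧
    -pdX H' t x y' z' w = -pdX H t x y z w + a1 * D' / D^2 ∧
    pdW H' t x y' z' w = pdW H t x y z w - a1 * (D - t * D') / D^2 ∧
    pdZ H' t x y' z' w = pdZ H t x y z w := by
  obtain rfl : a0 = -(2*a1) - 3*a2 := by linear_combination hrel
  simp only [pdX_HG2, pdY_HG2, pdZ_HG2, pdW_HG2]
  refine ⟨?_, ?_, ?_, ?_⟩ <;> field_simp <;> ring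

lemma pd_HG2_s2 {a0 a1 a2 : ℂ} (hrel : a0 + 2*a1 + 3*a2 = 0) {t x y z w : ℂ}
    (ht : t ≠ 0) (hE : z - y^3 ≠ 0) :
    let H := HG2 a0 a1 a2; let H' := HG2 a0 (a1+3*a2) (-a2)
    let E := z - y^3; let x' := x - 3*a2*y^2/E; let w' := w - a2/E
    let y' := -pdX H t x y z w; let E' := pdW H t x y z w - 3*y^2*y'
    pdY H' t x' y z w' = pdY H t x y z w - 3*a2*(2*y*y'*E - y^2*E') / E^2 ∧
    pdX H' t x' y z w' = pdX H t x y z w ∧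
    pdW H' t x' y z w' = pdW H t x y z w ∧
    -pdZ H' t x' y z w' = -pdZ H t x y z w + a2 * E' / E^2 := by
  obtain rfl : a0 = -(2*a1) - 3*a2 := by linear_combination hrel
  simp only [pdX_HG2, pdY_HG2, pdZ_HG2, pdW_HG2]
  refine ⟨?_, ?_, ?_, ?_⟩ <;> field_simp <;> ring

section Backlund

variable {a0 a1 a2 : ℂ} {U : Set ℂ} {x y z w : ℂ → ℂ}

theorem IsSol.backlund_s0 (hrel : a0 + 2*a1 + 3*a2 = 0) (hU0 : ∀ t ∈ U, t ≠ 0)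
    (hsol : IsSol (HG2 a0 a1 a2) U x y z w) (hz0 : ∀ t ∈ U, z t ≠ 0) :
    IsSol (HG2 (-a0) (a1+a0) a2) U x y z (fun t => w t - a0/(z t)) := by
  intro t ht
  obtain ⟨hx, hy, hz, hw⟩ := hsol t ht
  obtain ⟨eY, eX, eW, eZ⟩ := pd_HG2_s0 hrel (hU0 t ht) (hz0 t ht)
  refine ⟨?_, ?_, ?_, ?_⟩
  · rw [eY]; exact hx
  · rw [eX]; exact hy
  · rw [eW]; exact hz
  · rw [eZ]
    exact (hw.sub ((hasDerivAt_const t a0).div hz (hz0 t ht))).congr_deriv (by ring)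

theorem IsSol.backlund_s1 (hrel : a0 + 2*a1 + 3*a2 = 0) (hU0 : ∀ t ∈ U, t ≠ 0)
    (hsol : IsSol (HG2 a0 a1 a2) U x y z w) (hD0 : ∀ t ∈ U, x t - t * w t ≠ 0) :
    IsSol (HG2 (a0+a1) (-a1) (a2+a1)) U x (fun t => y t - a1/(x t - t * w t))
      (fun t => z t - a1*t/(x t - t * w t)) w := by
  intro t ht
  obtain ⟨hx, hy, hz, hw⟩ := hsol t ht
  obtain ⟨eY, eX, eW, eZ⟩ := pd_HG2_s1 hrel (hU0 t ht) (hD0 t ht)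
  have hD : HasDerivAt (fun s => x s - s * w s) _ t := hx.sub ((hasDerivAt_id' t).mul hw)
  refine ⟨?_, ?_, ?_, ?_⟩
  · rw [eY]; exact hx
  · rw [eX]
    exact (hy.sub ((hasDerivAt_const t a1).div hD (hD0 t ht))).congr_deriv (by ring)
  · rw [eW]
    exact (hz.sub (((hasDerivAt_id' t).const_mul a1).div hD (hD0 t ht))).congr_deriv (by ring)
  · rw [eZ]; exact hw

theorem IsSol.backlund_s2 (hrel : a0 + 2*a1 + 3*a2 = 0) (hU0 : ∀ t ∈ U, t ≠ 0)
    (hsol : IsSol (HG2 a0 a1 a2) U x y z w) (hE0 : ∀ t ∈ U, z t - (y t)^3 ≠ 0) :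
    IsSol (HG2 a0 (a1+3*a2) (-a2)) U (fun t => x t - 3*a2*(y t)^2/(z t - (y t)^3)) y
      z (fun t => w t - a2/(z t - (y t)^3)) := by
  intro t ht
  obtain ⟨hx, hy, hz, hw⟩ := hsol t ht
  obtain ⟨eY, eX, eW, eZ⟩ := pd_HG2_s2 hrel (hU0 t ht) (hE0 t ht)
  have hE : HasDerivAt (fun s => z s - y s ^ 3) _ t := hz.sub (hy.pow 3)
  refine ⟨?_, ?_, ?_, ?_⟩
  · have hN : HasDerivAt (fun s => 3*a2 * y s ^ 2) _ t := (hy.pow 2).const_mul (3*a2)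
    rw [eY]
    exact (hx.sub (hN.div hE (hE0 t ht))).congr_deriv (by ring)
  · rw [eX]; exact hy
  · rw [eW]; exact hz
  · rw [eZ]
    exact (hw.sub ((hasDerivAt_const t a2).div hE (hE0 t ht))).congr_deriv (by ring)

end Backlund

theorem backlund_G2_general (a0 a1 a2 : ℂ)
    (hrel : a0 + 2*a1 + 3*a2 = 0)
    (U : Set ℂ) (hU0 : ∀ t ∈ U, t ≠ 0)
    (x y z w : ℂ → ℂ)
    (hsol : IsSol (HG2 a0 a1 a2) U x y z w) :
    -- s0
    ((∀ t ∈ U, z t ≠ 0) →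
      IsSol (HG2 (-a0) (a1+a0) a2) U
        x y z (fun t => w t - a0/(z t))) ∧
    -- s1
    ((∀ t ∈ U, x t - t * w t ≠ 0) →
      IsSol (HG2 (a0+a1) (-a1) (a2+a1)) U
        x (fun t => y t - a1/(x t - t * w t))
        (fun t => z t - a1*t/(x t - t * w t)) w) ∧
    -- s2
    ((∀ t ∈ U, z t - (y t)^3 ≠ 0) →
      IsSol (HG2 a0 (a1+3*a2) (-a2)) U
        (fun t => x t - 3*a2*(y t)^2/(z t - (y t)^3)) y
        z (fun t => w t - a2/(z t - (y t)^3))) := by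
  exact ⟨hsol.backlund_s0 hrel hU0, hsol.backlund_s1 hrel hU0, hsol.backlund_s2 hrel hU0⟩

theorem backlund_G2 (a0 a1 a2 : ℂ)
    (hrel : a0 + 2*a1 + 3*a2 = 0)
    (U : Set ℂ) (hU : IsOpen U) (hU0 : ∀ t ∈ U, t ≠ 0)
    (x y z w : ℂ → ℂ)
    (hsol : IsSol (HG2 a0 a1 a2) U x y z w) :
    -- s0
    ((∀ t ∈ U, z t ≠ 0) →
      IsSol (HG2 (-a0) (a1+a0) a2) U
        x y z (fun t => w t - a0/(z t))) ∧
    -- s1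
    ((∀ t ∈ U, x t - t * w t ≠ 0) →
      IsSol (HG2 (a0+a1) (-a1) (a2+a1)) U
        x (fun t => y t - a1/(x t - t * w t))
        (fun t => z t - a1*t/(x t - t * w t)) w) ∧
    -- s2
    ((∀ t ∈ U, z t - (y t)^3 ≠ 0) →
      IsSol (HG2 a0 (a1+3*a2) (-a2)) U
        (fun t => x t - 3*a2*(y t)^2/(z t - (y t)^3)) y
        z (fun t => w t - a2/(z t - (y t)^3))) :=
  backlund_G2_general a0 a1 a2 hrel U hU0 x y z w hsol
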